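/- Under the stated hypotheses, for every t ∈ [0, τ] one has ‖z(t)‖ ≤ ‖G(0)‖_op · L_x · t · exp(L_G · L_x · t). -/

import Mathlib

/-!
Since `G` is Lipschitz, `‖G a‖ ≤ ‖G 0‖ + L_G ‖a‖`, so the vector field obeys the affine bound
`‖z'‖ ≤ L_G L_x ‖z‖ + ‖G 0‖ L_x`. Grönwall's inequality with `z 0 = 0` gives
`‖z t‖ ≤ ε (e^{Kt} - 1) / K` with `K = L_G L_x`, `ε = ‖G 0‖ L_x`, and `e^{Kt} - 1 ≤ K t e^{Kt}`
by convexity of `exp`.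
-/

open Real Set

theorem Real.exp_sub_one_le_mul_exp (x : ℝ) : exp x - 1 ≤ x * exp x := by
  have h := mul_le_mul_of_nonneg_left (one_sub_le_exp_neg x) (exp_pos x).le
  rw [← exp_add, add_neg_cancel, exp_zero] at h
  linarith

theorem gronwallBound_zero_le_mul_exp {K ε : ℝ} (hK : 0 ≤ K) (hε : 0 ≤ ε) (x : ℝ) :
    gronwallBound 0 K ε x ≤ ε * x * exp (K * x) := by
  rcases hK.eq_or_lt with rfl | hK
  · simp [gronwallBound_K0]
  · rw [gronwallBound_of_K_ne_0 hK.ne']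
    calc 0 * exp (K * x) + ε / K * (exp (K * x) - 1)
        ≤ ε / K * (K * x * exp (K * x)) := by
          rw [zero_mul, zero_add]
          exact mul_le_mul_of_nonneg_left (exp_sub_one_le_mul_exp _) (by positivity)
      _ = ε * x * exp (K * x) := by field_simp

theorem norm_le_mul_exp_of_norm_deriv_le {E : Type*} [NormedAddCommGroup E] [NormedSpace ℝ E]
    {f f' : ℝ → E} {K ε a b : ℝ} (hK : 0 ≤ K) (hε : 0 ≤ ε) (ha : f a = 0)
    (hf : ∀ u ∈ Icc a b, HasDerivAt f (f' u) u)
    (bound : ∀ u ∈ Icc a b, ‖f' u‖ ≤ K * ‖f u‖ + ε) :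
    ∀ t ∈ Icc a b, ‖f t‖ ≤ ε * (t - a) * exp (K * (t - a)) := by
  intro t ht
  refine le_trans ?_ (gronwallBound_zero_le_mul_exp hK hε (t - a))
  refine norm_le_gronwallBound_of_norm_deriv_right_le
    (fun u hu => (hf u hu).continuousAt.continuousWithinAt)
    (fun u hu => (hf u (Ico_subset_Icc_self hu)).hasDerivWithinAt)
    (by simp [ha]) (fun u hu => bound u (Ico_subset_Icc_self hu)) t ht

theorem norm_le_norm_zero_add_mul_norm {E F : Type*} [SeminormedAddCommGroup E]
    [SeminormedAddCommGroup F] {f : E → F} {L : ℝ} (hf : ∀ a b, ‖f a - f b‖ ≤ L * ‖a - b‖)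
    (a : E) : ‖f a‖ ≤ ‖f 0‖ + L * ‖a‖ := by
  calc ‖f a‖ ≤ ‖f 0‖ + ‖f a - f 0‖ := norm_le_insert' _ _
    _ ≤ ‖f 0‖ + L * ‖a‖ := by simpa using hf a 0

theorem cde_solution_bound_general
    (τ Lx LG : ℝ) (hLx : 0 ≤ Lx) (hLG : 0 ≤ LG)
    (d p : ℕ)
    (x' : ℝ → EuclideanSpace ℝ (Fin d))
    (hx' : ∀ u ∈ Set.Icc (0:ℝ) τ, ‖x' u‖ ≤ Lx)
    (G : EuclideanSpace ℝ (Fin p) → (EuclideanSpace ℝ (Fin d) →L[ℝ] EuclideanSpace ℝ (Fin p)))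
    (hG : ∀ a b, ‖G a - G b‖ ≤ LG * ‖a - b‖)
    (z : ℝ → EuclideanSpace ℝ (Fin p)) (hz0 : z 0 = 0)
    (hz : ∀ u ∈ Set.Icc (0:ℝ) τ, HasDerivAt z (G (z u) (x' u)) u) :
    ∀ t ∈ Set.Icc (0:ℝ) τ, ‖z t‖ ≤ ‖G 0‖ * Lx * t * Real.exp (LG * Lx * t) := by
  have affine_bound : ∀ u ∈ Icc (0:ℝ) τ, ‖G (z u) (x' u)‖ ≤ LG * Lx * ‖z u‖ + ‖G 0‖ * Lx := by
    intro u hu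
    calc ‖G (z u) (x' u)‖ ≤ ‖G (z u)‖ * ‖x' u‖ := (G (z u)).le_opNorm _
      _ ≤ (‖G 0‖ + LG * ‖z u‖) * Lx := by
          gcongr
          exacts [norm_le_norm_zero_add_mul_norm hG _, hx' u hu]
      _ = LG * Lx * ‖z u‖ + ‖G 0‖ * Lx := by ring
  intro t ht
  simpa using norm_le_mul_exp_of_norm_deriv_le (mul_nonneg hLG hLx)
    (mul_nonneg (norm_nonneg _) hLx) hz0 hz affine_bound t ht

/-- A-priori Grönwall-type bound on the solution of a controlled differential
equation driven by a path with derivative bounded by `Lx`: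
`‖z t‖ ≤ ‖G 0‖ * Lx * t * exp (LG * Lx * t)` for all `t ∈ [0, τ]`. -/
theorem cde_solution_bound
    (τ Lx LG : ℝ) (hτ : 0 ≤ τ) (hLx : 0 ≤ Lx) (hLG : 0 ≤ LG)
    (d p : ℕ) (hd : 0 < d) (hp : 0 < p)
    (x x' : ℝ → EuclideanSpace ℝ (Fin d))
    (hx : ∀ u ∈ Set.Icc (0:ℝ) τ, HasDerivAt x (x' u) u)
    (hx' : ∀ u ∈ Set.Icc (0:ℝ) τ, ‖x' u‖ ≤ Lx)
    (G : EuclideanSpace ℝ (Fin p) → (EuclideanSpace ℝ (Fin d) →L[ℝ] EuclideanSpace ℝ (Fin p)))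
    (hG : ∀ a b, ‖G a - G b‖ ≤ LG * ‖a - b‖)
    (z : ℝ → EuclideanSpace ℝ (Fin p)) (hz0 : z 0 = 0)
    (hz : ∀ u ∈ Set.Icc (0:ℝ) τ, HasDerivAt z (G (z u) (x' u)) u) :
    ∀ t ∈ Set.Icc (0:ℝ) τ, ‖z t‖ ≤ ‖G 0‖ * Lx * t * Real.exp (LG * Lx * t) :=
  cde_solution_bound_general τ Lx LG hLx hLG d p x' hx' G hG z hz0 hz
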